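/- arXiv:1211.2090 — 2 statements merged into one kernel-verified Lean document; each statement's English description precedes it below -/
import Mathlib

section
/- For every Shapley network design game with k ≥ 2 players, there exists a Nash equilibrium N with cost(N) ≤ ((k³(k+1)/2 − k²)/(1 + k³(k+1)/2 − k²)) · H_k · cost(O), where O is a social optimum. In particular, the price of stability of k-player Shapley network design games is at most ((k³(k+1)/2 − k²)/(1 + k³(k+1)/2 − k²)) · H_k. -/
/-- The `n`-th harmonic number `H_n = ∑_{i=1}^n 1/i`, as a real number. -/
noncomputable def harmonicR (n : ℕ) : ℝ := ∑ i ∈ Finset.range n, (1 : ℝ) / (i + 1)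

/-- A Shapley network design game with `k` players on a finite undirected graph:
an undirected simple graph `G` on the vertex type `V`, positive edge costs `c`,
and terminal pairs `s i`, `t i` for each player `i`. -/
structure ShapleyGame (V : Type) [Fintype V] [DecidableEq V] (k : ℕ) where
  G : SimpleGraph V
  c : Sym2 V → ℝ
  c_pos : ∀ e ∈ G.edgeSet, 0 < c e
  s : Fin k → V
  t : Fin k → V

namespace ShapleyGame

variable {V : Type} [Fintype V] [DecidableEq V] {k : ℕ}

/-- A strategy profile: a simple `s i`–`t i` path for each player `i`. -/
abbrev Profile (g : ShapleyGame V k) : Type :=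
  ∀ i : Fin k, g.G.Path (g.s i) (g.t i)

/-- `k_e`: the number of players whose path uses edge `e` in profile `P`. -/
def ke (g : ShapleyGame V k) (P : g.Profile) (e : Sym2 V) : ℕ :=
  (Finset.univ.filter fun i : Fin k => e ∈ (P i).1.edges).card

/-- The set `E(P)` of edges used by at least one player in profile `P`. -/
def profileEdges (g : ShapleyGame V k) (P : g.Profile) : Finset (Sym2 V) :=
  Finset.univ.filter fun e : Sym2 V => ∃ i : Fin k, e ∈ (P i).1.edges

/-- The individual cost of player `i`: each edge cost is shared equally
among the players using the edge. -/
noncomputable def playerCost (g : ShapleyGame V k) (P : g.Profile) (i : Fin k) : ℝ :=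
  ∑ e ∈ (P i).1.edges.toFinset, g.c e / (g.ke P e)

/-- The social cost of a profile: total cost of all used edges. -/
noncomputable def socialCost (g : ShapleyGame V k) (P : g.Profile) : ℝ :=
  ∑ e ∈ g.profileEdges P, g.c e

/-- Rosenthal's potential `Φ(P) = ∑_{e ∈ E(P)} H_{k_e} · c_e`. -/
noncomputable def potential (g : ShapleyGame V k) (P : g.Profile) : ℝ :=
  ∑ e ∈ g.profileEdges P, harmonicR (g.ke P e) * g.c e

/-- `P` is a Nash equilibrium: no player can decrease her individual cost
by unilaterally switching to another simple path. -/
def IsNash (g : ShapleyGame V k) (P : g.Profile) : Prop :=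
  ∀ (i : Fin k) (Q : g.G.Path (g.s i) (g.t i)),
    g.playerCost P i ≤ g.playerCost (Function.update P i Q) i

/-- `P` is a social optimum: it minimizes the social cost over all profiles. -/
def IsSocialOpt (g : ShapleyGame V k) (P : g.Profile) : Prop :=
  ∀ Q : g.Profile, g.socialCost P ≤ g.socialCost Q

/-- `P` is a potential minimizer: it minimizes Rosenthal's potential over all profiles. -/
def IsPotMin (g : ShapleyGame V k) (P : g.Profile) : Prop :=
  ∀ Q : g.Profile, g.potential P ≤ g.potential Q

/-- `P^j`: the set of edges used by exactly `j` players in profile `P`. -/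
def exactly (g : ShapleyGame V k) (P : g.Profile) (j : ℕ) : Finset (Sym2 V) :=
  (g.profileEdges P).filter fun e => g.ke P e = j

/-- `|M|`: the total cost of a set of edges. -/
noncomputable def csum (g : ShapleyGame V k) (M : Finset (Sym2 V)) : ℝ := ∑ e ∈ M, g.c e

end ShapleyGame

lemma harmonicR_zero : harmonicR 0 = 0 := by simp [harmonicR]

lemma harmonicR_succ (n : ℕ) : harmonicR (n + 1) = harmonicR n + 1 / (n + 1) := by
  simp [harmonicR, Finset.sum_range_succ]

lemma harmonicR_nonneg (n : ℕ) : 0 ≤ harmonicR n := by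
  apply Finset.sum_nonneg; intro i _; positivity

lemma harmonicR_mono : Monotone harmonicR := by
  intro a b hab
  apply Finset.sum_le_sum_of_subset_of_nonneg (Finset.range_subset_range.2 hab)
  intro i _ _; positivity

lemma harmonicR_one : harmonicR 1 = 1 := by norm_num [harmonicR]

lemma one_le_harmonicR {n : ℕ} (h : 1 ≤ n) : 1 ≤ harmonicR n := by
  calc (1:ℝ) = harmonicR 1 := harmonicR_one.symm
  _ ≤ harmonicR n := harmonicR_mono h

lemma harmonicR_two : harmonicR 2 = 1 + 1/2 := by norm_num [harmonicR, Finset.sum_range_succ]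

lemma half_le_harmonicR_sub_one {n : ℕ} (h : 2 ≤ n) : (1/2 : ℝ) ≤ harmonicR n - 1 := by
  have := harmonicR_mono h
  rw [harmonicR_two] at this
  linarith

lemma inv_le_harmonicR_sub {m n : ℕ} (h : m < n) (hn : 1 ≤ n) :
    (1 / n : ℝ) ≤ harmonicR n - harmonicR m := by
  obtain ⟨n', rfl⟩ : ∃ n', n = n' + 1 := ⟨n - 1, by omega⟩
  have h1 : harmonicR m ≤ harmonicR n' := harmonicR_mono (by omega)
  rw [harmonicR_succ]
  push_cast
  linarith


section Parity


attribute [local instance] Classical.propDecidable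

variable {V : Type} [DecidableEq V]

/-- the endpoints of `e` are on the same side of `S`. -/
def sameSide (S : Set V) : Sym2 V → Prop :=
  Sym2.lift ⟨fun u v => ((u ∈ S) ↔ (v ∈ S)), fun u v => propext iff_comm⟩

lemma sameSide_mk (S : Set V) (u v : V) : sameSide S s(u, v) ↔ ((u ∈ S) ↔ (v ∈ S)) :=
  Iff.rfl

lemma crossing_parity {G : SimpleGraph V} (S : Set V) {a b : V}
    (W : G.Walk a b) (hW : W.edges.Nodup) :
    (Even ((W.edges.toFinset.filter fun e => ¬ sameSide S e).card) ↔ ((a ∈ S) ↔ (b ∈ S))) := by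
  induction W with
  | nil => simp
  | @cons u x b hadj p ih =>
    rw [SimpleGraph.Walk.edges_cons] at hW ⊢
    obtain ⟨hne, hnd⟩ := List.nodup_cons.mp hW
    rw [List.toFinset_cons, Finset.filter_insert]
    by_cases hcr : sameSide S s(u, x)
    · rw [if_neg (not_not_intro hcr)]
      have hux : (u ∈ S) ↔ (x ∈ S) := (sameSide_mk S u x).1 hcr
      rw [ih hnd]
      tauto
    · rw [if_pos hcr, Finset.card_insert_of_notMem
        (fun hmem => hne (List.mem_toFinset.1 (Finset.filter_subset _ _ hmem)))]
      rw [Nat.even_add_one, ih hnd]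
      have hux : ¬((u ∈ S) ↔ (x ∈ S)) := fun h => hcr ((sameSide_mk S u x).2 h)
      tauto

end Parity

namespace ShapleyGame

variable {V : Type} [Fintype V] [DecidableEq V] {k : ℕ} (g : ShapleyGame V k)

lemma mem_profileEdges {P : g.Profile} {e : Sym2 V} :
    e ∈ g.profileEdges P ↔ ∃ i, e ∈ (P i).1.edges := by
  simp [profileEdges]

lemma mem_profileEdges_of_mem {P : g.Profile} {i : Fin k} {e : Sym2 V}
    (h : e ∈ (P i).1.edges) : e ∈ g.profileEdges P :=
  (g.mem_profileEdges).2 ⟨i, h⟩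

lemma mem_edgeSet_of_mem_profileEdges {P : g.Profile} {e : Sym2 V}
    (h : e ∈ g.profileEdges P) : e ∈ g.G.edgeSet := by
  obtain ⟨i, hi⟩ := (g.mem_profileEdges).1 h
  exact (P i).1.edges_subset_edgeSet hi

lemma c_pos_of_mem_profileEdges {P : g.Profile} {e : Sym2 V}
    (h : e ∈ g.profileEdges P) : 0 < g.c e :=
  g.c_pos e (g.mem_edgeSet_of_mem_profileEdges h)

lemma ke_le (P : g.Profile) (e : Sym2 V) : g.ke P e ≤ k := by
  classical
  calc g.ke P e ≤ Finset.univ.card := Finset.card_filter_le _ _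
  _ = k := by simp

lemma one_le_ke_of_mem {P : g.Profile} {i : Fin k} {e : Sym2 V}
    (h : e ∈ (P i).1.edges) : 1 ≤ g.ke P e := by
  apply Finset.card_pos.2
  exact ⟨i, Finset.mem_filter.2 ⟨Finset.mem_univ _, h⟩⟩

lemma ke_eq_zero {P : g.Profile} {e : Sym2 V}
    (h : e ∉ g.profileEdges P) : g.ke P e = 0 := by
  rw [ke, Finset.card_eq_zero, Finset.filter_eq_empty_iff]
  intro i _
  exact fun hc => h (g.mem_profileEdges_of_mem hc)

lemma one_le_ke_of_mem_profileEdges {P : g.Profile} {e : Sym2 V}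
    (h : e ∈ g.profileEdges P) : 1 ≤ g.ke P e := by
  obtain ⟨i, hi⟩ := (g.mem_profileEdges).1 h
  exact g.one_le_ke_of_mem hi

lemma edges_toFinset_subset (P : g.Profile) (i : Fin k) :
    (P i).1.edges.toFinset ⊆ g.profileEdges P := by
  intro e he
  exact g.mem_profileEdges_of_mem (List.mem_toFinset.1 he)

lemma playerCost_nonneg (P : g.Profile) (i : Fin k) : 0 ≤ g.playerCost P i := by
  apply Finset.sum_nonneg
  intro e he
  have := g.c_pos_of_mem_profileEdges (g.edges_toFinset_subset P i he)
  positivity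

lemma socialCost_nonneg (P : g.Profile) : 0 ≤ g.socialCost P := by
  apply Finset.sum_nonneg
  intro e he
  exact le_of_lt (g.c_pos_of_mem_profileEdges he)

lemma csum_nonneg {M : Finset (Sym2 V)}
    (h : ∀ e ∈ M, e ∈ g.G.edgeSet) : 0 ≤ g.csum M := by
  apply Finset.sum_nonneg
  intro e he
  exact le_of_lt (g.c_pos e (h e he))

/-- player cost written as a sum over any superset of the profile edges. -/
lemma playerCost_eq_sum_over (P : g.Profile) (i : Fin k) {U : Finset (Sym2 V)}
    (hU : g.profileEdges P ⊆ U) :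
    g.playerCost P i = ∑ e ∈ U, if e ∈ (P i).1.edges then g.c e / (g.ke P e) else 0 := by
  classical
  rw [playerCost, Finset.sum_ite, Finset.sum_const_zero, add_zero]
  apply Finset.sum_congr _ (fun _ _ => rfl)
  ext e
  simp only [Finset.mem_filter, List.mem_toFinset]
  constructor
  · intro h; exact ⟨hU (g.mem_profileEdges_of_mem h), h⟩
  · rintro ⟨-, h⟩; exact h

lemma potential_eq_sum_over (P : g.Profile) {U : Finset (Sym2 V)}
    (hU : g.profileEdges P ⊆ U) :
    g.potential P = ∑ e ∈ U, harmonicR (g.ke P e) * g.c e := by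
  rw [potential]
  apply Finset.sum_subset hU
  intro e _ he
  rw [g.ke_eq_zero he]
  simp [harmonicR]

lemma socialCost_eq_sum_playerCost (P : g.Profile) :
    g.socialCost P = ∑ i : Fin k, g.playerCost P i := by
  classical
  have : ∀ i : Fin k, g.playerCost P i
      = ∑ e ∈ g.profileEdges P, if e ∈ (P i).1.edges then g.c e / (g.ke P e) else 0 :=
    fun i => g.playerCost_eq_sum_over P i (le_refl _)
  rw [Finset.sum_congr rfl (fun i _ => this i), Finset.sum_comm, socialCost]
  apply Finset.sum_congr rfl
  intro e he
  rw [Finset.sum_ite, Finset.sum_const_zero, add_zero, Finset.sum_const]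
  have hke : (g.ke P e : ℝ) ≠ 0 := by
    have := g.one_le_ke_of_mem_profileEdges he
    positivity
  have : (Finset.univ.filter fun i : Fin k => e ∈ (P i).1.edges).card = g.ke P e := rfl
  rw [this, nsmul_eq_mul, mul_div_cancel₀ _ hke]

/-- splitting a cardinality of a filter over `univ` at an index `i`. -/
lemma card_filter_split (p : Fin k → Prop) [DecidablePred p] (i : Fin k) :
    (Finset.univ.filter p).card
      = ((Finset.univ.erase i).filter p).card + if p i then 1 else 0 := by
  classical
  have h2 : (Finset.univ.erase i).filter p = (Finset.univ.filter p).erase i := by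
    rw [Finset.filter_erase]
  rw [h2]
  by_cases hp : p i
  · rw [if_pos hp]
    have hi : i ∈ Finset.univ.filter p := Finset.mem_filter.2 ⟨Finset.mem_univ _, hp⟩
    rw [Finset.card_erase_of_mem hi]
    have : 1 ≤ (Finset.univ.filter p).card := Finset.card_pos.2 ⟨i, hi⟩
    omega
  · rw [if_neg hp, add_zero, Finset.erase_eq_of_notMem]
    intro hmem
    exact hp (Finset.mem_filter.1 hmem).2

lemma ke_update_eq (P : g.Profile) (i : Fin k) (Q : g.G.Path (g.s i) (g.t i)) (e : Sym2 V) :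
    g.ke (Function.update P i Q) e
      = ((Finset.univ.erase i).filter fun l => e ∈ (P l).1.edges).card
        + if e ∈ Q.1.edges then 1 else 0 := by
  classical
  rw [ke, card_filter_split _ i]
  congr 1
  · apply congrArg
    apply Finset.filter_congr
    intro l hl
    rw [Function.update_of_ne (Finset.mem_erase.1 hl).1]
  · rw [Function.update_self]

lemma ke_self_eq (P : g.Profile) (i : Fin k) (e : Sym2 V) :
    g.ke P e
      = ((Finset.univ.erase i).filter fun l => e ∈ (P l).1.edges).card
        + if e ∈ (P i).1.edges then 1 else 0 := by
  classical
  rw [ke, card_filter_split _ i]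

lemma potential_update_sub (P : g.Profile) (i : Fin k) (Q : g.G.Path (g.s i) (g.t i)) :
    g.potential (Function.update P i Q) - g.potential P
      = g.playerCost (Function.update P i Q) i - g.playerCost P i := by
  classical
  set P' := Function.update P i Q with hP'
  set U := g.profileEdges P ∪ g.profileEdges P' with hU
  have hsub : g.profileEdges P ⊆ U := Finset.subset_union_left
  have hsub' : g.profileEdges P' ⊆ U := Finset.subset_union_right
  rw [g.potential_eq_sum_over P hsub, g.potential_eq_sum_over P' hsub',
    g.playerCost_eq_sum_over P i hsub, g.playerCost_eq_sum_over P' i hsub',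
    ← Finset.sum_sub_distrib, ← Finset.sum_sub_distrib]
  apply Finset.sum_congr rfl
  intro e _
  have hQ : (P' i).1.edges = Q.1.edges := by rw [hP', Function.update_self]
  set m := ((Finset.univ.erase i).filter fun l => e ∈ (P l).1.edges).card with hm
  have hkP : g.ke P e = m + if e ∈ (P i).1.edges then 1 else 0 := g.ke_self_eq P i e
  have hkP' : g.ke P' e = m + if e ∈ Q.1.edges then 1 else 0 := by
    rw [hP', g.ke_update_eq P i Q e]
  have hne0 : ((m:ℝ) + 1) ≠ 0 := by positivity
  rw [hQ]
  by_cases h1 : e ∈ (P i).1.edges <;> by_cases h2 : e ∈ Q.1.edges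
  · have hkk : g.ke P' e = g.ke P e := by rw [hkP, hkP', if_pos h1, if_pos h2]
    rw [if_pos h1, if_pos h2, hkk]
    ring
  · rw [if_pos h1, if_neg h2, hkP, hkP', if_pos h1, if_neg h2, add_zero, harmonicR_succ]
    push_cast
    field_simp
    ring
  · rw [if_neg h1, if_pos h2, hkP, hkP', if_neg h1, if_pos h2, add_zero, harmonicR_succ]
    push_cast
    field_simp
    ring
  · rw [if_neg h1, if_neg h2, hkP, hkP', if_neg h1, if_neg h2]
    ring

lemma isNash_of_isPotMin {P : g.Profile} (h : g.IsPotMin P) : g.IsNash P := by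
  intro i Q
  have h1 := h (Function.update P i Q)
  have h2 := g.potential_update_sub P i Q
  linarith

lemma exists_isPotMin (hne : Nonempty g.Profile) : ∃ P : g.Profile, g.IsPotMin P := by
  classical
  letI : DecidableRel g.G.Adj := Classical.decRel _
  haveI : Finite g.Profile := by
    haveI : ∀ i : Fin k, Finite (g.G.Path (g.s i) (g.t i)) := fun i => Finite.of_fintype _
    exact Pi.finite
  obtain ⟨P, hP⟩ := Finite.exists_min (g.potential)
  exact ⟨P, hP⟩

lemma socialCost_le_potential (P : g.Profile) : g.socialCost P ≤ g.potential P := by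
  apply Finset.sum_le_sum
  intro e he
  have h1 : 1 ≤ harmonicR (g.ke P e) := one_le_harmonicR (g.one_le_ke_of_mem_profileEdges he)
  have h2 : 0 < g.c e := g.c_pos_of_mem_profileEdges he
  nlinarith

lemma potential_le_harmonic_socialCost (P : g.Profile) :
    g.potential P ≤ harmonicR k * g.socialCost P := by
  rw [socialCost, Finset.mul_sum]
  apply Finset.sum_le_sum
  intro e he
  have h1 : harmonicR (g.ke P e) ≤ harmonicR k := harmonicR_mono (g.ke_le P e)
  have h2 : 0 < g.c e := g.c_pos_of_mem_profileEdges he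
  nlinarith

/-- the cost of the `N`-shared edges is at most twice the potential gap. -/
lemma shared_le (P : g.Profile) :
    g.csum ((g.profileEdges P).filter fun e => 2 ≤ g.ke P e)
      ≤ 2 * (g.potential P - g.socialCost P) := by
  classical
  have key : ∑ e ∈ g.profileEdges P, (if 2 ≤ g.ke P e then (1/2) * g.c e else 0)
      ≤ g.potential P - g.socialCost P := by
    rw [potential, socialCost, ← Finset.sum_sub_distrib]
    apply Finset.sum_le_sum
    intro e he
    have hc : 0 < g.c e := g.c_pos_of_mem_profileEdges he
    by_cases h2 : 2 ≤ g.ke P e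
    · rw [if_pos h2]
      have := half_le_harmonicR_sub_one h2
      nlinarith
    · rw [if_neg h2]
      have := one_le_harmonicR (g.one_le_ke_of_mem_profileEdges he)
      nlinarith
  rw [csum]
  rw [Finset.sum_filter]
  have : ∑ e ∈ g.profileEdges P, (if 2 ≤ g.ke P e then g.c e else 0)
      = 2 * ∑ e ∈ g.profileEdges P, (if 2 ≤ g.ke P e then (1/2) * g.c e else 0) := by
    rw [Finset.mul_sum]
    apply Finset.sum_congr rfl
    intro e _
    by_cases h2 : 2 ≤ g.ke P e
    · rw [if_pos h2, if_pos h2]; ring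
    · rw [if_neg h2, if_neg h2]; ring
  rw [this]
  linarith

/-- the cost of the not-fully-shared edges of `O` is at most `k` times the potential slack. -/
lemma cheap_le (hk : 1 ≤ k) (P : g.Profile) :
    g.csum ((g.profileEdges P).filter fun e => g.ke P e ≠ k)
      ≤ (k:ℝ) * (harmonicR k * g.socialCost P - g.potential P) := by
  classical
  have hkpos : (0:ℝ) < (k:ℝ) := by exact_mod_cast hk
  have key : ∑ e ∈ g.profileEdges P, (if g.ke P e ≠ k then (1/(k:ℝ)) * g.c e else 0)
      ≤ harmonicR k * g.socialCost P - g.potential P := by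
    rw [potential, socialCost, Finset.mul_sum, ← Finset.sum_sub_distrib]
    apply Finset.sum_le_sum
    intro e he
    have hc : 0 < g.c e := g.c_pos_of_mem_profileEdges he
    by_cases h2 : g.ke P e ≠ k
    · rw [if_pos h2]
      have hlt : g.ke P e < k := lt_of_le_of_ne (g.ke_le P e) h2
      have := inv_le_harmonicR_sub hlt hk
      nlinarith
    · rw [if_neg h2]
      push_neg at h2
      rw [h2]
      nlinarith
  rw [csum, Finset.sum_filter]
  have : ∑ e ∈ g.profileEdges P, (if g.ke P e ≠ k then g.c e else 0)
      = (k:ℝ) * ∑ e ∈ g.profileEdges P, (if g.ke P e ≠ k then (1/(k:ℝ)) * g.c e else 0) := by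
    rw [Finset.mul_sum]
    apply Finset.sum_congr rfl
    intro e _
    by_cases h2 : g.ke P e ≠ k
    · rw [if_pos h2, if_pos h2]
      field_simp
    · rw [if_neg h2, if_neg h2]; ring
  rw [this]
  nlinarith [key]

/-- total edge cost of a single player's path, bounded by her cost plus shared edges. -/
lemma path_cost_le (P : g.Profile) (j : Fin k) :
    ∑ e ∈ (P j).1.edges.toFinset, g.c e
      ≤ g.playerCost P j + g.csum ((g.profileEdges P).filter fun e => 2 ≤ g.ke P e) := by
  classical
  have step : ∑ e ∈ (P j).1.edges.toFinset, g.c e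
      ≤ g.playerCost P j
        + ∑ e ∈ (P j).1.edges.toFinset, (if 2 ≤ g.ke P e then g.c e else 0) := by
    rw [playerCost, ← Finset.sum_add_distrib]
    apply Finset.sum_le_sum
    intro e he
    have hmem : e ∈ g.profileEdges P := g.edges_toFinset_subset P j he
    have hc : 0 < g.c e := g.c_pos_of_mem_profileEdges hmem
    have h1 : 1 ≤ g.ke P e := g.one_le_ke_of_mem (List.mem_toFinset.1 he)
    by_cases h2 : 2 ≤ g.ke P e
    · rw [if_pos h2]
      have : (0:ℝ) < (g.ke P e : ℝ) := by exact_mod_cast h1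
      have hdiv : 0 ≤ g.c e / (g.ke P e : ℝ) := by positivity
      linarith
    · rw [if_neg h2]
      have hke1 : g.ke P e = 1 := by omega
      rw [hke1]
      norm_num
  refine le_trans step ?_
  have : ∑ e ∈ (P j).1.edges.toFinset, (if 2 ≤ g.ke P e then g.c e else 0)
      ≤ g.csum ((g.profileEdges P).filter fun e => 2 ≤ g.ke P e) := by
    rw [csum, ← Finset.sum_filter]
    apply Finset.sum_le_sum_of_subset_of_nonneg
    · intro e he
      rw [Finset.mem_filter] at he ⊢
      exact ⟨g.edges_toFinset_subset P j he.1, he.2⟩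
    · intro e he _
      exact le_of_lt (g.c_pos_of_mem_profileEdges (Finset.mem_filter.1 he).1)
  linarith


attribute [local instance] Classical.propDecidable

/-- If player `i` has an alternative walk whose edges are either "cheap" edges of `O`
(not shared by all players) or edges of `N j`, her Nash cost is small. -/
lemma deviation_bound {N O : g.Profile} (hN : g.IsNash N) {i j : Fin k} (hij : i ≠ j)
    {W : g.G.Walk (g.s i) (g.t i)}
    (hW : ∀ e ∈ W.edges,
      e ∈ ((g.profileEdges O).filter fun e => g.ke O e ≠ k) ∨ e ∈ (N j).1.edges) :
    g.playerCost N i ≤ g.csum ((g.profileEdges O).filter fun e => g.ke O e ≠ k)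
      + (1/2) * ∑ e ∈ (N j).1.edges.toFinset, g.c e := by
  classical
  set cheapO := (g.profileEdges O).filter (fun e => g.ke O e ≠ k) with hcheap
  set Q : g.G.Path (g.s i) (g.t i) := W.toPath with hQdef
  have hQsub : ∀ e ∈ Q.1.edges, e ∈ W.edges := fun e he => W.edges_toPath_subset he
  refine le_trans (hN i Q) ?_
  set P' := Function.update N i Q with hP'
  have hcost : g.playerCost P' i = ∑ e ∈ Q.1.edges.toFinset, g.c e / (g.ke P' e) := by
    rw [playerCost, hP']
    simp only [Function.update_self]
  have hbound : ∀ e ∈ Q.1.edges.toFinset,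
      g.c e / (g.ke P' e) ≤ (if e ∈ (N j).1.edges then (1/2) * g.c e else g.c e) := by
    intro e he
    have heQ : e ∈ Q.1.edges := List.mem_toFinset.1 he
    have hce : 0 < g.c e := g.c_pos e (Q.1.edges_subset_edgeSet heQ)
    have hiP : i ∈ Finset.univ.filter (fun l => e ∈ (P' l).1.edges) :=
      Finset.mem_filter.2 ⟨Finset.mem_univ _, by rw [hP', Function.update_self]; exact heQ⟩
    have h1 : 1 ≤ g.ke P' e := Finset.card_pos.2 ⟨i, hiP⟩
    by_cases hNj : e ∈ (N j).1.edges
    · rw [if_pos hNj]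
      have hjP : j ∈ Finset.univ.filter (fun l => e ∈ (P' l).1.edges) :=
        Finset.mem_filter.2 ⟨Finset.mem_univ _, by
          rw [hP', Function.update_of_ne (Ne.symm hij)]; exact hNj⟩
      have h2 : 2 ≤ g.ke P' e := Finset.one_lt_card_iff.2 ⟨i, j, hiP, hjP, hij⟩
      have h2' : (2:ℝ) ≤ (g.ke P' e : ℝ) := by exact_mod_cast h2
      rw [div_le_iff₀ (by positivity)]
      nlinarith
    · rw [if_neg hNj]
      have h1' : (1:ℝ) ≤ (g.ke P' e : ℝ) := by exact_mod_cast h1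
      rw [div_le_iff₀ (by positivity)]
      nlinarith
  rw [hcost]
  refine le_trans (Finset.sum_le_sum hbound) ?_
  rw [Finset.sum_ite]
  have hA : ∑ e ∈ Q.1.edges.toFinset.filter (fun e => e ∈ (N j).1.edges), (1/2) * g.c e
      ≤ (1/2) * ∑ e ∈ (N j).1.edges.toFinset, g.c e := by
    rw [← Finset.mul_sum]
    have : ∑ e ∈ Q.1.edges.toFinset.filter (fun e => e ∈ (N j).1.edges), g.c e
        ≤ ∑ e ∈ (N j).1.edges.toFinset, g.c e := by
      apply Finset.sum_le_sum_of_subset_of_nonneg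
      · intro e he
        exact List.mem_toFinset.2 (Finset.mem_filter.1 he).2
      · intro e he _
        exact le_of_lt (g.c_pos e ((N j).1.edges_subset_edgeSet (List.mem_toFinset.1 he)))
    linarith
  have hB : ∑ e ∈ Q.1.edges.toFinset.filter (fun e => ¬ e ∈ (N j).1.edges), g.c e
      ≤ g.csum cheapO := by
    rw [csum]
    apply Finset.sum_le_sum_of_subset_of_nonneg
    · intro e he
      rw [Finset.mem_filter, List.mem_toFinset] at he
      rcases hW e (hQsub e he.1) with h | h
      · exact h
      · exact absurd h he.2
    · intro e he _
      exact le_of_lt (g.c_pos_of_mem_profileEdges (Finset.mem_filter.1 he).1)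
  linarith

/-- every edge of `EK` (the fully shared edges of `O`) lies on every player's `O`-path. -/
lemma mem_path_of_full {O : g.Profile} {e : Sym2 V} (hke : g.ke O e = k) (l : Fin k) :
    e ∈ (O l).1.edges := by
  classical
  have hcard : (Finset.univ.filter fun i : Fin k => e ∈ (O i).1.edges).card
      = Fintype.card (Fin k) := by
    rw [Fintype.card_fin]; exact hke
  have huniv := Finset.eq_univ_of_card _ hcard
  have : l ∈ Finset.univ.filter fun i : Fin k => e ∈ (O i).1.edges := by
    rw [huniv]; exact Finset.mem_univ l
  exact (Finset.mem_filter.1 this).2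

/-- The key structural lemma: every player can deviate to a path consisting of
cheap `O`-edges and the edges of `N j`. -/
lemma key_bound {N O : g.Profile} (hN : g.IsNash N) {i j : Fin k} (hij : i ≠ j) :
    g.playerCost N i ≤ g.csum ((g.profileEdges O).filter fun e => g.ke O e ≠ k)
      + (1/2) * ∑ e ∈ (N j).1.edges.toFinset, g.c e := by
  classical
  set cheapO := (g.profileEdges O).filter (fun e => g.ke O e ≠ k) with hcheap
  have hcheap_sub : (cheapO : Set (Sym2 V)) ⊆ g.G.edgeSet := by
    intro e he
    exact g.mem_edgeSet_of_mem_profileEdges (Finset.mem_filter.1 (Finset.mem_coe.1 he)).1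
  set GF := SimpleGraph.fromEdgeSet (cheapO : Set (Sym2 V)) with hGF
  have hGFle : GF ≤ g.G := by
    have := SimpleGraph.fromEdgeSet_mono hcheap_sub
    rwa [SimpleGraph.fromEdgeSet_edgeSet] at this
  have hGFedge : ∀ {x y : V} (w : GF.Walk x y), ∀ e ∈ w.edges, e ∈ cheapO := by
    intro x y w e he
    have := w.edges_subset_edgeSet he
    rw [hGF, SimpleGraph.edgeSet_fromEdgeSet] at this
    exact Finset.mem_coe.1 this.1
  have hGFG : ∀ {x y : V} (w : GF.Walk x y), ∀ e ∈ w.edges, e ∈ g.G.edgeSet :=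
    fun w e he => hcheap_sub (Finset.mem_coe.2 (hGFedge w e he))
  -- same-side property of cheap edges
  have hsame : ∀ (z : V) (e : Sym2 V), e ∈ cheapO →
      sameSide {v | GF.Reachable z v} e := by
    intro z e he
    induction e using Sym2.ind with
    | _ u v =>
      have hadj : g.G.Adj u v := by
        rw [← SimpleGraph.mem_edgeSet]
        exact g.mem_edgeSet_of_mem_profileEdges (Finset.mem_filter.1 he).1
      have hadjF : GF.Adj u v := by
        rw [hGF, SimpleGraph.fromEdgeSet_adj]
        exact ⟨Finset.mem_coe.2 he, hadj.ne⟩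
      rw [sameSide_mk]
      constructor
      · intro hu; exact hu.trans hadjF.reachable
      · intro hv; exact hv.trans hadjF.symm.reachable
  -- parity counts agree along all O-paths
  have hresolve : ∀ (z : V) (l : Fin k) (e : Sym2 V), e ∈ (O l).1.edges →
      (g.ke O e = k) ∨ sameSide {v | GF.Reachable z v} e := by
    intro z l e he
    by_cases hek : g.ke O e = k
    · exact Or.inl hek
    · exact Or.inr (hsame z e (Finset.mem_filter.2 ⟨g.mem_profileEdges_of_mem he, hek⟩))
  have hcount : ∀ (z : V) (l : Fin k),
      (O l).1.edges.toFinset.filter (fun e => ¬ sameSide {v | GF.Reachable z v} e)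
        = ((g.profileEdges O).filter fun e => g.ke O e = k).filter
            (fun e => ¬ sameSide {v | GF.Reachable z v} e) := by
    intro z l
    ext e
    simp only [Finset.mem_filter, List.mem_toFinset]
    constructor
    · rintro ⟨hel, hcr⟩
      rcases hresolve z l e hel with h | h
      · exact ⟨⟨g.mem_profileEdges_of_mem hel, h⟩, hcr⟩
      · exact absurd h hcr
    · rintro ⟨⟨-, hek⟩, hcr⟩
      exact ⟨g.mem_path_of_full hek l, hcr⟩
  have hparity : ∀ (z : V),
      ((g.s i ∈ {v | GF.Reachable z v}) ↔ (g.t i ∈ {v | GF.Reachable z v}))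
        ↔ ((g.s j ∈ {v | GF.Reachable z v}) ↔ (g.t j ∈ {v | GF.Reachable z v})) := by
    intro z
    have hi := crossing_parity {v | GF.Reachable z v} (O i).1 (O i).2.edges_nodup
    have hj := crossing_parity {v | GF.Reachable z v} (O j).1 (O j).2.edges_nodup
    rw [hcount z i] at hi
    rw [hcount z j] at hj
    rw [← hi, ← hj]
  -- the two reachability sets
  set S : Set V := {v | GF.Reachable (g.s i) v} with hS
  set S' : Set V := {v | GF.Reachable (g.t i) v} with hS'
  have hsi : g.s i ∈ S := SimpleGraph.Reachable.refl _
  have hti' : g.t i ∈ S' := SimpleGraph.Reachable.refl _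
  by_cases hti : g.t i ∈ S
  · -- there is an all-cheap deviation
    obtain ⟨w⟩ := hti
    have hWdev : ∀ e ∈ (w.transfer g.G (hGFG w)).edges, e ∈ cheapO ∨ e ∈ (N j).1.edges := by
      intro e he
      rw [SimpleGraph.Walk.edges_transfer] at he
      exact Or.inl (hGFedge w e he)
    exact g.deviation_bound hN hij hWdev
  · -- parity forces a connection to s j or t j on both sides
    have hSiff := hparity (g.s i)
    have hS'iff := hparity (g.t i)
    have h1 : ¬ ((g.s j ∈ S) ↔ (g.t j ∈ S)) := by
      rw [← hSiff]
      intro h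
      exact hti (h.1 hsi)
    have hsi' : g.s i ∉ S' := by
      intro h
      exact hti (SimpleGraph.Reachable.symm h)
    have h2 : ¬ ((g.s j ∈ S') ↔ (g.t j ∈ S')) := by
      rw [← hS'iff]
      intro h
      exact hsi' (h.2 hti')
    by_cases hsj : g.s j ∈ S
    · have htjS : g.t j ∉ S := fun h => h1 ⟨fun _ => h, fun _ => hsj⟩
      have hsjS' : g.s j ∉ S' := by
        intro h
        exact hti ((hsj : GF.Reachable (g.s i) (g.s j)).trans (SimpleGraph.Reachable.symm h))
      have htjS' : g.t j ∈ S' := by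
        by_contra h
        exact h2 ⟨fun hc => absurd hc hsjS', fun hc => absurd hc h⟩
      obtain ⟨w1⟩ := (hsj : GF.Reachable (g.s i) (g.s j))
      obtain ⟨w2⟩ := (htjS' : GF.Reachable (g.t i) (g.t j))
      set Wdev := (w1.transfer g.G (hGFG w1)).append
        ((N j).1.append (w2.transfer g.G (hGFG w2)).reverse) with hWdev
      have hWedges : ∀ e ∈ Wdev.edges, e ∈ cheapO ∨ e ∈ (N j).1.edges := by
        intro e he
        rw [hWdev, SimpleGraph.Walk.edges_append, SimpleGraph.Walk.edges_append] at he
        rcases List.mem_append.1 he with h | h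
        · rw [SimpleGraph.Walk.edges_transfer] at h
          exact Or.inl (hGFedge w1 e h)
        rcases List.mem_append.1 h with h | h
        · exact Or.inr h
        · rw [SimpleGraph.Walk.edges_reverse, List.mem_reverse,
            SimpleGraph.Walk.edges_transfer] at h
          exact Or.inl (hGFedge w2 e h)
      exact g.deviation_bound hN hij hWedges
    · have htjS : g.t j ∈ S := by
        by_contra h
        exact h1 ⟨fun hc => absurd hc hsj, fun hc => absurd hc h⟩
      have htjS' : g.t j ∉ S' := by
        intro h
        exact hti ((htjS : GF.Reachable (g.s i) (g.t j)).trans (SimpleGraph.Reachable.symm h))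
      have hsjS' : g.s j ∈ S' := by
        by_contra h
        exact h2 ⟨fun hc => absurd hc h, fun hc => absurd hc htjS'⟩
      obtain ⟨w1⟩ := (htjS : GF.Reachable (g.s i) (g.t j))
      obtain ⟨w2⟩ := (hsjS' : GF.Reachable (g.t i) (g.s j))
      set Wdev := (w1.transfer g.G (hGFG w1)).append
        ((N j).1.reverse.append (w2.transfer g.G (hGFG w2)).reverse) with hWdev
      have hWedges : ∀ e ∈ Wdev.edges, e ∈ cheapO ∨ e ∈ (N j).1.edges := by
        intro e he
        rw [hWdev, SimpleGraph.Walk.edges_append, SimpleGraph.Walk.edges_append] at he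
        rcases List.mem_append.1 he with h | h
        · rw [SimpleGraph.Walk.edges_transfer] at h
          exact Or.inl (hGFedge w1 e h)
        rcases List.mem_append.1 h with h | h
        · rw [SimpleGraph.Walk.edges_reverse, List.mem_reverse] at h
          exact Or.inr h
        · rw [SimpleGraph.Walk.edges_reverse, List.mem_reverse,
            SimpleGraph.Walk.edges_transfer] at h
          exact Or.inl (hGFedge w2 e h)
      exact g.deviation_bound hN hij hWedges

end ShapleyGame

private lemma arith_step {kR T m x y : ℝ} (hk : 2 ≤ kR)
    (hT : T ≤ m + (kR - 1) * (y + (1/2) * (m + x)))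
    (havg : kR * m ≤ T) : T ≤ 2 * kR * y + kR * x := by
  have h1 := mul_le_mul_of_nonneg_left hT (by linarith : (0:ℝ) ≤ 2 * kR)
  have h2 := mul_le_mul_of_nonneg_left havg (by linarith : (0:ℝ) ≤ kR + 1)
  have h3 : (kR - 1) * T ≤ (kR - 1) * (2 * kR * y + kR * x) := by nlinarith [h1, h2]
  exact le_of_mul_le_mul_left h3 (by linarith)

private lemma arith_Ta {kR T x y a1 a3 : ℝ} (hk : 2 ≤ kR)
    (h : T ≤ 2 * kR * y + kR * x) (hy : y ≤ kR * a3) (hx : x ≤ 2 * a1) :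
    T ≤ 2 * kR^2 * a3 + 2 * kR * a1 := by
  have h1 := mul_le_mul_of_nonneg_left hy (by linarith : (0:ℝ) ≤ 2 * kR)
  have h2 := mul_le_mul_of_nonneg_left hx (by linarith : (0:ℝ) ≤ kR)
  nlinarith [h1, h2]

private lemma arith_final {kR T a1 a2 a3 Z : ℝ} (hk : 2 ≤ kR)
    (hTa : T ≤ 2 * kR^2 * a3 + 2 * kR * a1)
    (ha1 : 0 ≤ a1) (ha2 : 0 ≤ a2) (ha3 : 0 ≤ a3)
    (hZ : Z = T + (a1 + a2 + a3)) (hT0 : 0 ≤ T) :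
    T * (1 + (kR^3 * (kR + 1) / 2 - kR^2)) ≤ (kR^3 * (kR + 1) / 2 - kR^2) * Z := by
  have hA2k2 : 2 * kR^2 ≤ kR^3 * (kR + 1) / 2 - kR^2 := by nlinarith [sq_nonneg (kR - 2)]
  have hA2k : 2 * kR ≤ kR^3 * (kR + 1) / 2 - kR^2 := by nlinarith [sq_nonneg (kR - 2)]
  have hfinal : T ≤ (kR^3 * (kR + 1) / 2 - kR^2) * (a1 + a2 + a3) := by
    nlinarith [mul_nonneg (by linarith : (0:ℝ) ≤ (kR^3 * (kR + 1) / 2 - kR^2) - 2*kR^2) ha3,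
      mul_nonneg (by linarith : (0:ℝ) ≤ (kR^3 * (kR + 1) / 2 - kR^2) - 2*kR) ha1,
      mul_nonneg (by linarith : (0:ℝ) ≤ kR^3 * (kR + 1) / 2 - kR^2) ha2]
  rw [hZ]
  nlinarith [hfinal, hT0, (by linarith : (0:ℝ) ≤ kR^3 * (kR + 1) / 2 - kR^2)]


/-- in every `k`-player Shapley network design game (`k ≥ 2`) with a
social optimum `O`, there is a Nash equilibrium of social cost at most
`((k³(k+1)/2 − k²)/(1 + k³(k+1)/2 − k²)) · H_k · cost(O)`;
in particular the price of stability is at most this quantity. -/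
theorem pos_upper_bound {V : Type} [Fintype V] [DecidableEq V] {k : ℕ} (hk : 2 ≤ k)
    (g : ShapleyGame V k) (O : g.Profile) (hO : g.IsSocialOpt O) :
    ∃ N : g.Profile, g.IsNash N ∧
      g.socialCost N ≤
        (((k : ℝ) ^ 3 * ((k : ℝ) + 1) / 2 - (k : ℝ) ^ 2) /
            (1 + (k : ℝ) ^ 3 * ((k : ℝ) + 1) / 2 - (k : ℝ) ^ 2)) *
          harmonicR k * g.socialCost O := by
  classical
  obtain ⟨N, hPM⟩ := g.exists_isPotMin ⟨O⟩
  have hNash := g.isNash_of_isPotMin hPM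
  refine ⟨N, hNash, ?_⟩
  set C := g.socialCost O with hCdef
  set T := g.socialCost N with hTdef
  set HK := harmonicR k with hHKdef
  have hkR : (2:ℝ) ≤ (k:ℝ) := by exact_mod_cast hk
  have hT0 : 0 ≤ T := g.socialCost_nonneg N
  have hC0 : 0 ≤ C := g.socialCost_nonneg O
  have hTpot : T ≤ g.potential N := g.socialCost_le_potential N
  have hpotNO : g.potential N ≤ g.potential O := hPM O
  have hpotO : g.potential O ≤ HK * C := g.potential_le_harmonic_socialCost O
  set x := g.csum ((g.profileEdges N).filter fun e => 2 ≤ g.ke N e) with hxdef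
  set y := g.csum ((g.profileEdges O).filter fun e => g.ke O e ≠ k) with hydef
  have hx : x ≤ 2 * (g.potential N - T) := g.shared_le N
  have hy : y ≤ (k:ℝ) * (HK * C - g.potential O) := g.cheap_le (by omega) O
  have hx0 : 0 ≤ x := g.csum_nonneg
    (fun e he => g.mem_edgeSet_of_mem_profileEdges (Finset.mem_filter.1 he).1)
  have hy0 : 0 ≤ y := g.csum_nonneg
    (fun e he => g.mem_edgeSet_of_mem_profileEdges (Finset.mem_filter.1 he).1)
  -- the cheapest player
  have hne : (Finset.univ : Finset (Fin k)).Nonempty := ⟨⟨0, by omega⟩, Finset.mem_univ _⟩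
  obtain ⟨j0, -, hj0⟩ := Finset.exists_min_image Finset.univ (g.playerCost N) hne
  set m := g.playerCost N j0 with hmdef
  have hm0 : 0 ≤ m := g.playerCost_nonneg N j0
  have hsum : T = ∑ i, g.playerCost N i := g.socialCost_eq_sum_playerCost N
  have havg : (k:ℝ) * m ≤ T := by
    have h1 : (Finset.univ : Finset (Fin k)).card • m ≤ ∑ i, g.playerCost N i :=
      Finset.card_nsmul_le_sum _ _ _ (fun i _ => hj0 i (Finset.mem_univ i))
    rw [Finset.card_univ, Fintype.card_fin, nsmul_eq_mul] at h1
    rw [hsum]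
    exact h1
  -- the key per-player bound
  have hper : ∀ i : Fin k, i ≠ j0 → g.playerCost N i ≤ y + (1/2) * (m + x) := by
    intro i hij
    have hkey := g.key_bound (N := N) (O := O) hNash hij
    have hNj := g.path_cost_le N j0
    calc g.playerCost N i
        ≤ y + (1/2) * ∑ e ∈ (N j0).1.edges.toFinset, g.c e := hkey
      _ ≤ y + (1/2) * (m + x) := by linarith
  -- summing up
  have hcard : ((Finset.univ : Finset (Fin k)).erase j0).card = k - 1 := by
    rw [Finset.card_erase_of_mem (Finset.mem_univ _), Finset.card_univ, Fintype.card_fin]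
  have hT : T ≤ m + ((k:ℝ) - 1) * (y + (1/2) * (m + x)) := by
    rw [hsum, ← Finset.add_sum_erase _ _ (Finset.mem_univ j0), ← hmdef]
    have h2 : ∑ i ∈ (Finset.univ : Finset (Fin k)).erase j0, g.playerCost N i
        ≤ ((Finset.univ : Finset (Fin k)).erase j0).card • (y + (1/2) * (m + x)) :=
      Finset.sum_le_card_nsmul _ _ _ (fun i hi => hper i (Finset.mem_erase.1 hi).1)
    rw [hcard, nsmul_eq_mul] at h2
    have hcast : ((k - 1 : ℕ) : ℝ) = (k:ℝ) - 1 := by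
      have : (1:ℕ) ≤ k := by omega
      push_cast [this]
      ring
    rw [hcast] at h2
    linarith
  have hstep2 : T ≤ 2 * (k:ℝ) * y + (k:ℝ) * x := arith_step hkR hT havg
  set a1 := g.potential N - T with ha1def
  set a2 := g.potential O - g.potential N with ha2def
  set a3 := HK * C - g.potential O with ha3def
  have ha1 : 0 ≤ a1 := by rw [ha1def]; linarith
  have ha2 : 0 ≤ a2 := by rw [ha2def]; linarith
  have ha3 : 0 ≤ a3 := by rw [ha3def]; linarith
  have hy' : y ≤ (k:ℝ) * a3 := by rw [ha3def]; exact hy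
  have hx' : x ≤ 2 * a1 := by rw [ha1def]; exact hx
  have hTa : T ≤ 2 * (k:ℝ)^2 * a3 + 2 * (k:ℝ) * a1 := arith_Ta hkR hstep2 hy' hx'
  have hHKC : HK * C = T + (a1 + a2 + a3) := by rw [ha1def, ha2def, ha3def]; ring
  have hgoal := arith_final hkR hTa ha1 ha2 ha3 hHKC hT0
  have hApos : (0:ℝ) < 1 + ((k:ℝ)^3 * ((k:ℝ) + 1) / 2 - (k:ℝ)^2) := by
    nlinarith [hkR, sq_nonneg ((k:ℝ) - 2)]
  have hden : 1 + (k : ℝ) ^ 3 * ((k : ℝ) + 1) / 2 - (k : ℝ) ^ 2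
      = 1 + ((k:ℝ)^3 * ((k:ℝ) + 1) / 2 - (k:ℝ)^2) := by ring
  rw [hden, div_mul_eq_mul_div, div_mul_eq_mul_div, le_div_iff₀ hApos]
  calc T * (1 + ((k:ℝ)^3 * ((k:ℝ) + 1) / 2 - (k:ℝ)^2))
      ≤ ((k:ℝ)^3 * ((k:ℝ) + 1) / 2 - (k:ℝ)^2) * (HK * C) := hgoal
    _ = ((k:ℝ)^3 * ((k:ℝ) + 1) / 2 - (k:ℝ)^2) * HK * C := by ring
end

section
/- Every Shapley network design game on a finite graph in which each player has at least one s_i–t_i path possesses a Nash equilibrium. -/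
namespace ShapleyGame

variable {V : Type} [Fintype V] [DecidableEq V] {k : ℕ}

lemma harmonicR_succ (n : ℕ) : harmonicR (n + 1) = harmonicR n + 1 / (n + 1) := by
  simp [harmonicR, Finset.sum_range_succ]

lemma potential_eq (g : ShapleyGame V k) (P : g.Profile) :
    g.potential P = ∑ e ∈ Finset.univ, harmonicR (g.ke P e) * g.c e := by
  unfold potential
  apply Finset.sum_subset (Finset.subset_univ _)
  intro e _ he
  have : g.ke P e = 0 := by
    rw [ke, Finset.card_eq_zero, Finset.filter_eq_empty_iff]
    intro j _
    simp only [profileEdges, Finset.mem_filter, Finset.mem_univ, true_and] at he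
    exact fun h => he ⟨j, h⟩
  simp [this, harmonicR]

lemma playerCost_eq (g : ShapleyGame V k) (P : g.Profile) (i : Fin k) :
    g.playerCost P i =
      ∑ e ∈ Finset.univ, if e ∈ (P i).1.edges then g.c e / (g.ke P e) else 0 := by
  unfold playerCost
  rw [eq_comm]
  simp only [← List.mem_toFinset]
  rw [Finset.sum_ite_mem, Finset.univ_inter]

lemma ke_split (g : ShapleyGame V k) (P : g.Profile) (i : Fin k) (e : Sym2 V) :
    g.ke P e = ((Finset.univ.erase i).filter fun j => e ∈ (P j).1.edges).card
      + (if e ∈ (P i).1.edges then 1 else 0) := by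
  rw [ShapleyGame.ke, Finset.card_filter,
    ← Finset.sum_erase_add _ _ (Finset.mem_univ i), ← Finset.card_filter]

lemma filter_erase_update (g : ShapleyGame V k) (P : g.Profile) (i : Fin k)
    (q : g.G.Path (g.s i) (g.t i)) (e : Sym2 V) :
    ((Finset.univ.erase i).filter fun j => e ∈ ((Function.update P i q) j).1.edges)
      = (Finset.univ.erase i).filter fun j => e ∈ (P j).1.edges := by
  apply Finset.filter_congr
  intro j hj
  rw [Function.update_of_ne (Finset.ne_of_mem_erase hj)]

lemma edge_id (g : ShapleyGame V k) (P : g.Profile) (i : Fin k)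
    (q : g.G.Path (g.s i) (g.t i)) (e : Sym2 V) :
    harmonicR (g.ke (Function.update P i q) e) * g.c e - harmonicR (g.ke P e) * g.c e
      = (if e ∈ q.1.edges then g.c e / (g.ke (Function.update P i q) e) else 0)
        - (if e ∈ (P i).1.edges then g.c e / (g.ke P e) else 0) := by
  set m := ((Finset.univ.erase i).filter fun j => e ∈ (P j).1.edges).card with hm
  have h1 : g.ke P e = m + (if e ∈ (P i).1.edges then 1 else 0) := ke_split g P i e
  have h2 : g.ke (Function.update P i q) e = m + (if e ∈ q.1.edges then 1 else 0) := by
    rw [ke_split g _ i e, filter_erase_update, Function.update_self]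
  by_cases ha : e ∈ (P i).1.edges <;> by_cases hb : e ∈ q.1.edges <;>
      simp only [ha, hb, if_true, if_false, add_zero] at h1 h2 ⊢ <;>
      rw [h1, h2]
  · simp
  · rw [harmonicR_succ]
    push_cast
    ring
  · rw [harmonicR_succ]
    push_cast
    ring
  · simp

lemma pot_diff (g : ShapleyGame V k) (P : g.Profile) (i : Fin k)
    (q : g.G.Path (g.s i) (g.t i)) :
    g.potential (Function.update P i q) - g.potential P
      = g.playerCost (Function.update P i q) i - g.playerCost P i := by
  rw [potential_eq, potential_eq, playerCost_eq, playerCost_eq,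
    ← Finset.sum_sub_distrib, ← Finset.sum_sub_distrib]
  apply Finset.sum_congr rfl
  intro e _
  simpa [Function.update_self] using edge_id g P i q e

end ShapleyGame

/-- every Shapley network design game on a finite graph in which each
player has at least one `s_i`–`t_i` path possesses a Nash equilibrium. -/
theorem nash_exists {V : Type} [Fintype V] [DecidableEq V] {k : ℕ}
    (g : ShapleyGame V k) (hpath : ∀ i : Fin k, Nonempty (g.G.Path (g.s i) (g.t i))) :
    ∃ N : g.Profile, g.IsNash N := by
  classical
  haveI : DecidableRel g.G.Adj := Classical.decRel _
  haveI : Nonempty g.Profile := ⟨fun i => (hpath i).some⟩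
  obtain ⟨N, hN⟩ := Finite.exists_min g.potential
  refine ⟨N, fun i Q => ?_⟩
  have h := ShapleyGame.pot_diff g N i Q
  have h2 := hN (Function.update N i Q)
  linarith
end
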